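/- arXiv:1109.4777 — 2 statements merged into one kernel-verified Lean document; each statement's English description precedes it below -/
import Mathlib

section
/- Let V0 ~ Beta(1, α1) and V1 ~ Beta(1+α1, α2) be independent, and set S1 = V0·V1, S2 = V0. Then S1 ~ Beta(1, α1+α2) and S2 ~ Beta(1, α1). -/
open MeasureTheory ProbabilityTheory Real Filter

/-- The density of a Beta(a,b) random variable on (0,1). -/
noncomputable def betaPDFReal (a b x : ℝ) : ℝ :=
  if 0 < x ∧ x < 1 then
    (Real.Gamma (a + b) / (Real.Gamma a * Real.Gamma b)) * x ^ (a - 1) * (1 - x) ^ (b - 1)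
  else 0

/-- The Beta(a,b) probability measure on ℝ. -/
noncomputable def betaMeasure (a b : ℝ) : Measure ℝ :=
  MeasureTheory.volume.withDensity (fun x => ENNReal.ofReal (_root_.betaPDFReal a b x))

/-- `X` is a beta random variable with parameters `(a, b)` on `(Ω, μ)`. -/
def HasBetaLaw {Ω : Type*} [MeasurableSpace Ω] (μ : Measure Ω) (X : Ω → ℝ) (a b : ℝ) : Prop :=
  Measurable X ∧ μ.map X = _root_.betaMeasure a b

open Set
open scoped ENNReal

/-! If `V0 ~ Beta(1, α₁)` then `P(V0 > s) = (1 - s) ^ α₁` for `0 ≤ s < 1`. Conditioning on `V1 = y`,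
`P(V0 V1 > t) = ∫_t^1 (1 - t / y) ^ α₁ dBeta(1 + α₁, α₂)(y)`, and the factor `y ^ α₁` of the
`Beta(1 + α₁, α₂)` density turns `(1 - t / y) ^ α₁` into `(y - t) ^ α₁`. The substitution
`y = t + (1 - t) u` then gives `(1 - t) ^ (α₁ + α₂)` times the normalising beta integral, which is
the tail of `Beta(1, α₁ + α₂)`. -/

theorem ext_of_Ioi_of_ae_mem_Ioo {a b : ℝ} {μ ν : Measure ℝ} [IsProbabilityMeasure μ]
    [IsProbabilityMeasure ν] (hμ : ∀ᵐ x ∂μ, x ∈ Ioo a b) (hν : ∀ᵐ x ∂ν, x ∈ Ioo a b)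
    (h : ∀ t ∈ Ico a b, μ (Ioi t) = ν (Ioi t)) : μ = ν := by
  have null : ∀ {ρ : Measure ℝ}, (∀ᵐ x ∂ρ, x ∈ Ioo a b) → ∀ s ⊆ (Ioo a b)ᶜ, ρ s = 0 :=
    fun hρ s hs => measure_mono_null hs (ae_iff.1 hρ)
  refine Measure.ext_of_Iic μ ν fun t => ?_
  rcases lt_or_ge t a with ht0 | ht0
  · have hsub : Iic t ⊆ (Ioo a b)ᶜ := fun x hx hx' => (hx.trans_lt ht0).not_gt hx'.1
    rw [null hμ _ hsub, null hν _ hsub]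
  rw [← compl_Ioi, prob_compl_eq_one_sub measurableSet_Ioi, prob_compl_eq_one_sub measurableSet_Ioi]
  rcases lt_or_ge t b with ht1 | ht1
  · rw [h t ⟨ht0, ht1⟩]
  · have hsub : Ioi t ⊆ (Ioo a b)ᶜ := fun x hx hx' => (ht1.trans_lt hx).not_gt hx'.2
    rw [null hμ _ hsub, null hν _ hsub]

theorem betaMeasure_eq_probabilityTheory_betaMeasure (a b : ℝ) :
    _root_.betaMeasure a b = ProbabilityTheory.betaMeasure a b := by
  rw [_root_.betaMeasure, ProbabilityTheory.betaMeasure]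
  congr 1 with x
  rw [ProbabilityTheory.betaPDF, _root_.betaPDFReal, ProbabilityTheory.betaPDFReal,
    ProbabilityTheory.beta, one_div_div]

namespace ProbabilityTheory

variable {a b : ℝ}

lemma betaPDF_eq_indicator (a b : ℝ) :
    betaPDF a b = (Ioo 0 1).indicator
      fun x => ENNReal.ofReal (1 / beta a b * x ^ (a - 1) * (1 - x) ^ (b - 1)) := by
  ext x
  by_cases hx : x ∈ Ioo (0 : ℝ) 1
  · rw [indicator_of_mem hx, betaPDF_of_pos_lt_one hx.1 hx.2]
  · rw [indicator_of_notMem hx, betaPDF_eq, if_neg (show ¬(0 < x ∧ x < 1) from hx),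
      ENNReal.ofReal_zero]

lemma betaMeasure_eq_withDensity_restrict (a b : ℝ) :
    betaMeasure a b = (volume.restrict (Ioo 0 1)).withDensity
      fun x => ENNReal.ofReal (1 / beta a b * x ^ (a - 1) * (1 - x) ^ (b - 1)) := by
  rw [betaMeasure, betaPDF_eq_indicator, withDensity_indicator measurableSet_Ioo]

lemma betaMeasure_apply (a b : ℝ) {s : Set ℝ} (hs : MeasurableSet s) :
    betaMeasure a b s =
      ∫⁻ x in s ∩ Ioo 0 1, ENNReal.ofReal (1 / beta a b * x ^ (a - 1) * (1 - x) ^ (b - 1)) := by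
  rw [betaMeasure_eq_withDensity_restrict, withDensity_apply _ hs,
    Measure.restrict_restrict hs]

lemma lintegral_betaMeasure (a b : ℝ) {g : ℝ → ℝ≥0∞} (hg : Measurable g) :
    ∫⁻ x, g x ∂betaMeasure a b =
      ∫⁻ x in Ioo 0 1, ENNReal.ofReal (1 / beta a b * x ^ (a - 1) * (1 - x) ^ (b - 1)) * g x := by
  rw [betaMeasure_eq_withDensity_restrict,
    lintegral_withDensity_eq_lintegral_mul _ (by fun_prop) hg]
  rfl

lemma ae_mem_Ioo_betaMeasure (a b : ℝ) : ∀ᵐ x ∂betaMeasure a b, x ∈ Ioo 0 1 := by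
  rw [betaMeasure_eq_withDensity_restrict]
  exact withDensity_absolutelyContinuous _ _ |>.ae_le (ae_restrict_mem measurableSet_Ioo)

lemma setLIntegral_rpow_mul_one_sub_rpow (ha : 0 < a) (hb : 0 < b) :
    ∫⁻ x in Ioo 0 1, ENNReal.ofReal (x ^ (a - 1) * (1 - x) ^ (b - 1)) =
      ENNReal.ofReal (beta a b) := by
  have hB := beta_pos ha hb
  have h := lintegral_betaPDF_eq_one ha hb
  simp_rw [lintegral_betaPDF, mul_assoc, ENNReal.ofReal_mul (one_div_nonneg.2 hB.le)] at h
  rw [lintegral_const_mul _ (by fun_prop)] at h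
  rw [← mul_one (ENNReal.ofReal (beta a b)), ← h, ← mul_assoc, ← ENNReal.ofReal_mul hB.le,
    mul_one_div_cancel hB.ne', ENNReal.ofReal_one, one_mul]

lemma setLIntegral_sub_rpow_mul_one_sub_rpow (ha : 0 < a) (hb : 0 < b) {t : ℝ} (ht : t < 1) :
    ∫⁻ y in Ioo t 1, ENNReal.ofReal ((y - t) ^ (a - 1) * (1 - y) ^ (b - 1)) =
      ENNReal.ofReal ((1 - t) ^ (a + b - 1) * beta a b) := by
  have h1t : 0 < 1 - t := sub_pos.2 ht
  have himage : (fun u => (1 - t) * u + t) '' Ioo 0 1 = Ioo t 1 := by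
    rw [image_affine_Ioo h1t]; simp
  have hderiv : ∀ u ∈ Ioo (0 : ℝ) 1,
      HasDerivWithinAt (fun u => (1 - t) * u + t) (1 - t) (Ioo 0 1) u := fun u _ =>
    (((hasDerivAt_id u).const_mul (1 - t)).add_const t).hasDerivWithinAt.congr_deriv (mul_one _)
  have hinj : InjOn (fun u => (1 - t) * u + t) (Ioo 0 1) := fun u _ v _ huv => by
    simpa [h1t.ne'] using huv
  have hintegrand : ∀ u ∈ Ioo (0 : ℝ) 1,
      (1 - t) * (((1 - t) * u + t - t) ^ (a - 1) * (1 - ((1 - t) * u + t)) ^ (b - 1)) =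
        (1 - t) ^ (a + b - 1) * (u ^ (a - 1) * (1 - u) ^ (b - 1)) := fun u hu => by
    rw [add_sub_cancel_right, show 1 - ((1 - t) * u + t) = (1 - t) * (1 - u) by ring,
      mul_rpow h1t.le hu.1.le, mul_rpow h1t.le (sub_pos.2 hu.2).le,
      show a + b - 1 = 1 + (a - 1) + (b - 1) by ring, rpow_add h1t, rpow_add h1t, rpow_one]
    ring
  rw [← himage, lintegral_image_eq_lintegral_abs_deriv_mul measurableSet_Ioo hderiv hinj,
    abs_of_pos h1t]
  simp_rw [← ENNReal.ofReal_mul h1t.le]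
  rw [setLIntegral_congr_fun measurableSet_Ioo fun u hu => by
      rw [hintegrand u hu, ENNReal.ofReal_mul (by positivity)],
    lintegral_const_mul _ (by fun_prop), setLIntegral_rpow_mul_one_sub_rpow ha hb,
    ← ENNReal.ofReal_mul (by positivity)]

lemma betaMeasure_Ioi_of_one_le (a b : ℝ) {s : ℝ} (hs : 1 ≤ s) : betaMeasure a b (Ioi s) = 0 := by
  rw [betaMeasure_apply _ _ measurableSet_Ioi, Ioi_inter_Ioo,
    Ioo_eq_empty (hs.trans (le_max_left s 0)).not_gt, Measure.restrict_empty,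
    lintegral_zero_measure]

lemma betaMeasure_one_Ioi (hb : 0 < b) {s : ℝ} (hs0 : 0 ≤ s) (hs1 : s < 1) :
    betaMeasure 1 b (Ioi s) = ENNReal.ofReal ((1 - s) ^ b) := by
  have hB := beta_pos one_pos hb
  have h := setLIntegral_sub_rpow_mul_one_sub_rpow one_pos hb hs1
  simp only [sub_self, rpow_zero, one_mul, add_sub_cancel_left] at h
  rw [betaMeasure_apply _ _ measurableSet_Ioi, Ioi_inter_Ioo, max_eq_left hs0]
  simp_rw [sub_self, rpow_zero, mul_one, ENNReal.ofReal_mul (one_div_nonneg.2 hB.le)]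
  rw [lintegral_const_mul _ (by fun_prop), h, ← ENNReal.ofReal_mul (one_div_nonneg.2 hB.le)]
  field_simp

variable {α₁ α₂ : ℝ}

lemma prod_betaMeasure_setOf_lt_mul (hα₁ : 0 < α₁) (hα₂ : 0 < α₂) {t : ℝ} (ht0 : 0 ≤ t)
    (ht1 : t < 1) :
    (betaMeasure 1 α₁).prod (betaMeasure (1 + α₁) α₂) {p | t < p.1 * p.2} =
      ENNReal.ofReal ((1 - t) ^ (α₁ + α₂)) := by
  have hB := beta_pos (by positivity : 0 < 1 + α₁) hα₂
  have := isProbabilityMeasureBeta one_pos hα₁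
  have := isProbabilityMeasureBeta (by positivity : 0 < 1 + α₁) hα₂
  have hS : MeasurableSet {p : ℝ × ℝ | t < p.1 * p.2} :=
    measurableSet_lt measurable_const (by fun_prop)
  have hslice : ∀ y ∈ Ioo (0 : ℝ) 1,
      ENNReal.ofReal (1 / beta (1 + α₁) α₂ * y ^ (1 + α₁ - 1) * (1 - y) ^ (α₂ - 1)) *
        betaMeasure 1 α₁ ((fun x => (x, y)) ⁻¹' {p | t < p.1 * p.2}) =
      (Ioo t 1).indicator (fun y => ENNReal.ofReal (1 / beta (1 + α₁) α₂) *
        ENNReal.ofReal ((y - t) ^ (1 + α₁ - 1) * (1 - y) ^ (α₂ - 1))) y := by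
    intro y hy
    have hpre : (fun x => (x, y)) ⁻¹' {p : ℝ × ℝ | t < p.1 * p.2} = Ioi (t / y) := by
      ext x; simp [div_lt_iff₀ hy.1]
    rw [hpre]
    rcases le_or_gt y t with hyt | hty
    · rw [indicator_of_notMem fun h => hyt.not_gt h.1,
        betaMeasure_Ioi_of_one_le _ _ ((one_le_div hy.1).2 hyt), mul_zero]
    · have hty' : 0 ≤ 1 - t / y := sub_nonneg.2 ((div_le_one hy.1).2 hty.le)
      have hdensity : 1 / beta (1 + α₁) α₂ * y ^ (1 + α₁ - 1) * (1 - y) ^ (α₂ - 1) * (1 - t / y) ^ α₁ =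
          1 / beta (1 + α₁) α₂ * ((y - t) ^ (1 + α₁ - 1) * (1 - y) ^ (α₂ - 1)) := by
        have hfactor : y - t = y * (1 - t / y) := by rw [mul_one_sub, mul_div_cancel₀ t hy.1.ne']
        rw [add_sub_cancel_left, hfactor, mul_rpow hy.1.le hty']
        ring
      rw [indicator_of_mem (show y ∈ Ioo t 1 from ⟨hty, hy.2⟩),
        betaMeasure_one_Ioi hα₁ (div_nonneg ht0 hy.1.le) ((div_lt_one hy.1).2 hty),
        ← ENNReal.ofReal_mul' (rpow_nonneg hty' _), hdensity,
        ENNReal.ofReal_mul (one_div_nonneg.2 hB.le)]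
  rw [Measure.prod_apply_symm hS, lintegral_betaMeasure _ _ (measurable_measure_prodMk_right hS),
    setLIntegral_congr_fun measurableSet_Ioo hslice, setLIntegral_indicator measurableSet_Ioo,
    Ioo_inter_Ioo, max_eq_left ht0, min_self, lintegral_const_mul _ (by fun_prop),
    setLIntegral_sub_rpow_mul_one_sub_rpow (by positivity) hα₂ ht1,
    ← ENNReal.ofReal_mul (one_div_nonneg.2 hB.le), show 1 + α₁ + α₂ - 1 = α₁ + α₂ by ring]
  field_simp

theorem map_mul_prod_betaMeasure (hα₁ : 0 < α₁) (hα₂ : 0 < α₂) :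
    ((betaMeasure 1 α₁).prod (betaMeasure (1 + α₁) α₂)).map (fun p => p.1 * p.2) =
      betaMeasure 1 (α₁ + α₂) := by
  have := isProbabilityMeasureBeta one_pos hα₁
  have := isProbabilityMeasureBeta (by positivity : 0 < 1 + α₁) hα₂
  have := isProbabilityMeasureBeta one_pos (add_pos hα₁ hα₂)
  have hmul : Measurable fun p : ℝ × ℝ => p.1 * p.2 := by fun_prop
  have := Measure.isProbabilityMeasure_map (μ := (betaMeasure 1 α₁).prod (betaMeasure (1 + α₁) α₂))
    hmul.aemeasurable
  refine ext_of_Ioi_of_ae_mem_Ioo ?_ (ae_mem_Ioo_betaMeasure _ _) fun t ht => ?_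
  · refine (ae_map_iff hmul.aemeasurable measurableSet_Ioo).2 ?_
    filter_upwards [Measure.quasiMeasurePreserving_fst.ae (ae_mem_Ioo_betaMeasure 1 α₁),
      Measure.quasiMeasurePreserving_snd.ae (ae_mem_Ioo_betaMeasure (1 + α₁) α₂)] with p h₁ h₂
    exact ⟨mul_pos h₁.1 h₂.1, mul_lt_one_of_nonneg_of_lt_one_left h₁.1.le h₁.2 h₂.2.le⟩
  · rw [Measure.map_apply hmul measurableSet_Ioi, betaMeasure_one_Ioi (add_pos hα₁ hα₂) ht.1 ht.2]
    exact prod_betaMeasure_setOf_lt_mul hα₁ hα₂ ht.1 ht.2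

end ProbabilityTheory

theorem betaProduct_H2_marginals_general {Ω : Type*} [MeasurableSpace Ω] (μ : Measure Ω)
    (V0 V1 : Ω → ℝ) (α1 α2 : ℝ) (hα1 : 0 < α1) (hα2 : 0 < α2)
    (h0 : HasBetaLaw μ V0 1 α1) (h1 : HasBetaLaw μ V1 (1 + α1) α2)
    (hind : IndepFun V0 V1 μ) :
    HasBetaLaw μ (fun ω => V0 ω * V1 ω) 1 (α1 + α2) ∧ HasBetaLaw μ V0 1 α1 := by
  obtain ⟨hm0, hl0⟩ := h0
  obtain ⟨hm1, hl1⟩ := h1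
  refine ⟨⟨hm0.mul hm1, ?_⟩, hm0, hl0⟩
  rw [betaMeasure_eq_probabilityTheory_betaMeasure] at hl0 hl1 ⊢
  have : IsProbabilityMeasure (μ.map V0) := hl0 ▸ isProbabilityMeasureBeta one_pos hα1
  have : IsProbabilityMeasure (μ.map V1) := hl1 ▸ isProbabilityMeasureBeta (by positivity) hα2
  have hpair := (indepFun_iff_map_prod_eq_prod_map_map' hm0.aemeasurable hm1.aemeasurable
    inferInstance inferInstance).1 hind
  rw [← map_mul_prod_betaMeasure hα1 hα2, ← hl0, ← hl1, ← hpair,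
    Measure.map_map (by fun_prop) (hm0.prodMk hm1)]
  rfl

theorem betaProduct_H2_marginals {Ω : Type*} [MeasurableSpace Ω] (μ : Measure Ω)
    [IsProbabilityMeasure μ] (V0 V1 : Ω → ℝ) (α1 α2 : ℝ) (hα1 : 0 < α1) (hα2 : 0 < α2)
    (h0 : HasBetaLaw μ V0 1 α1) (h1 : HasBetaLaw μ V1 (1 + α1) α2)
    (hind : IndepFun V0 V1 μ) :
    HasBetaLaw μ (fun ω => V0 ω * V1 ω) 1 (α1 + α2) ∧ HasBetaLaw μ V0 1 α1 :=
  betaProduct_H2_marginals_general μ V0 V1 α1 α2 hα1 hα2 h0 h1 hind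
end

section
/- In the r-dimensional (H2) construction, for 1 ≤ i < j ≤ r, setting A = α1+···+α_{r−i+1} and B = α1+···+α_{r−j+1}, one has E[S_i·S_j]/(E[S_i]+E[S_j]−E[S_i·S_j]) · sqrt((2E[S_i]/E[S_i²] − 1)(2E[S_j]/E[S_j²] − 1)) = 2·sqrt(1+A)·(1+B)^{3/2} / (2(1+B)² + (2+B)(A−B)). -/
open MeasureTheory ProbabilityTheory Real Filter

/-!
With `c k = 1 + α₁ + ⋯ + αₖ`, the factor `V k ~ Beta(c k, α (k+1))` has `E[V k] = c k / c (k+1)`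
and `E[V k ^ 2] = c k (c k + 1) / (c (k+1) (c (k+1) + 1))`, by the Beta integral. By independence
the moments of `S_i = ∏_{k ≤ r-i} V k` are telescoping products: `E[S_i] = 1/(1+A)` and
`E[S_i ^ 2] = 2/((1+A)(2+A))`; and since `S_i S_j = S_j ^ 2 ∏_{r-j < k ≤ r-i} V k`,
`E[S_i S_j] = 2/((2+B)(1+A))`. The identity is then algebra.
-/

open Finset

lemma integral_rpow_mul_one_sub_rpow {s t : ℝ} (hs : 0 < s) (ht : 0 < t) :
    ∫ x in (0:ℝ)..1, x ^ (s - 1) * (1 - x) ^ (t - 1)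
      = Real.Gamma s * Real.Gamma t / Real.Gamma (s + t) := by
  have hbeta : Complex.betaIntegral s t
      = ((∫ x in (0:ℝ)..1, x ^ (s - 1) * (1 - x) ^ (t - 1) : ℝ) : ℂ) := by
    rw [Complex.betaIntegral, ← intervalIntegral.integral_ofReal]
    refine intervalIntegral.integral_congr fun x hx => ?_
    rw [Set.uIcc_of_le zero_le_one] at hx
    rw [Complex.ofReal_mul, Complex.ofReal_cpow hx.1, Complex.ofReal_cpow (by linarith [hx.2])]
    push_cast
    ring
  have key := Complex.Gamma_mul_Gamma_eq_betaIntegral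
    (s := (s:ℂ)) (t := (t:ℂ)) (by simpa using hs) (by simpa using ht)
  rw [hbeta, ← Complex.ofReal_add, Complex.Gamma_ofReal, Complex.Gamma_ofReal,
    Complex.Gamma_ofReal, ← Complex.ofReal_mul, ← Complex.ofReal_mul] at key
  rw [eq_div_iff (Real.Gamma_pos_of_pos (add_pos hs ht)).ne', Complex.ofReal_injective key,
    mul_comm]

lemma integral_pow_betaMeasure {a b : ℝ} (ha : 0 < a) (hb : 0 < b) (n : ℕ) :
    ∫ x, x ^ n ∂(_root_.betaMeasure a b)
      = Real.Gamma (a + b) * Real.Gamma (a + n) / (Real.Gamma a * Real.Gamma (a + b + n)) := by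
  have hdensity : (fun x : ℝ => (_root_.betaPDFReal a b x).toNNReal • x ^ n)
      = Set.indicator (Set.Ioo (0:ℝ) 1)
        (fun x => (Real.Gamma (a + b) / (Real.Gamma a * Real.Gamma b)) *
          (x ^ (a + n - 1) * (1 - x) ^ (b - 1))) := by
    ext x
    by_cases hx : 0 < x ∧ x < 1
    · rw [Set.indicator_of_mem (show x ∈ Set.Ioo 0 1 from hx)]
      have hx0 : 0 < x := hx.1
      have h1x : 0 < 1 - x := by linarith [hx.2]
      simp only [_root_.betaPDFReal, if_pos hx, NNReal.smul_def, smul_eq_mul]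
      rw [Real.coe_toNNReal _ (by positivity), show a + n - 1 = (a - 1) + n by ring,
        Real.rpow_add hx0, Real.rpow_natCast]
      ring
    · rw [Set.indicator_of_notMem (show x ∉ Set.Ioo 0 1 from hx)]
      simp [_root_.betaPDFReal, if_neg hx]
  change ∫ x, x ^ n ∂(volume.withDensity fun x => ((_root_.betaPDFReal a b x).toNNReal : ENNReal))
    = _
  have hmeas : Measurable (_root_.betaPDFReal a b) :=
    Measurable.ite measurableSet_Ioo (by fun_prop) (by fun_prop)
  rw [integral_withDensity_eq_integral_smul hmeas.real_toNNReal, hdensity,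
    integral_indicator measurableSet_Ioo, ← integral_Ioc_eq_integral_Ioo,
    ← intervalIntegral.integral_of_le zero_le_one, intervalIntegral.integral_const_mul,
    integral_rpow_mul_one_sub_rpow (by positivity) hb, show a + n + b = a + b + n by ring]
  field_simp

section BetaLaw

variable {Ω : Type*} [MeasurableSpace Ω] {μ : Measure Ω} {X : Ω → ℝ} {a b : ℝ}

lemma HasBetaLaw.integral_pow (h : HasBetaLaw μ X a b) (ha : 0 < a) (hb : 0 < b) (n : ℕ) :
    ∫ ω, X ω ^ n ∂μ
      = Real.Gamma (a + b) * Real.Gamma (a + n) / (Real.Gamma a * Real.Gamma (a + b + n)) := by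
  rw [← integral_pow_betaMeasure ha hb n, ← h.2, integral_map h.1.aemeasurable (by fun_prop)]

lemma HasBetaLaw.integral_eq (h : HasBetaLaw μ X a b) (ha : 0 < a) (hb : 0 < b) :
    ∫ ω, X ω ∂μ = a / (a + b) := by
  have h1 := h.integral_pow ha hb 1
  simp only [pow_one, Nat.cast_one] at h1
  rw [h1, Real.Gamma_add_one ha.ne', Real.Gamma_add_one (add_pos ha hb).ne']
  field_simp

lemma HasBetaLaw.integral_sq_eq (h : HasBetaLaw μ X a b) (ha : 0 < a) (hb : 0 < b) :
    ∫ ω, X ω ^ 2 ∂μ = a * (a + 1) / ((a + b) * (a + b + 1)) := by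
  have h2 := h.integral_pow ha hb 2
  rw [Nat.cast_ofNat, show a + (2:ℝ) = a + 1 + 1 by ring,
    show a + b + (2:ℝ) = a + b + 1 + 1 by ring] at h2
  rw [h2, Real.Gamma_add_one (s := a + 1) (by positivity),
    Real.Gamma_add_one (s := a + b + 1) (by positivity),
    Real.Gamma_add_one ha.ne', Real.Gamma_add_one (add_pos ha hb).ne']
  field_simp

end BetaLaw

lemma Finset.prod_Ico_div_succ {K : Type*} [Field K] {f : ℕ → K} {m n : ℕ} (hmn : m ≤ n)
    (hf : ∀ k, m ≤ k → k ≤ n → f k ≠ 0) :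
    ∏ k ∈ Ico m n, f k / f (k + 1) = f m / f n := by
  induction n, hmn using Nat.le_induction with
  | base => rw [Ico_self, prod_empty, div_self (hf m le_rfl le_rfl)]
  | succ n hmn ih =>
    rw [prod_Ico_succ_top hmn, ih fun k hmk hkn => hf k hmk (by omega),
      div_mul_div_cancel₀ (hf n hmn (by omega))]

lemma ProbabilityTheory.iIndepFun.integral_prod_range_pow {Ω : Type*} [MeasurableSpace Ω]
    {μ : Measure Ω} {r n : ℕ} {V : ℕ → Ω → ℝ} (hind : iIndepFun (fun k : Fin r => V k) μ)
    (hV : ∀ k < r, Measurable (V k)) (hn : n ≤ r) (e : ℕ → ℕ) :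
    ∫ ω, ∏ k ∈ range n, V k ω ^ e k ∂μ = ∏ k ∈ range n, ∫ ω, V k ω ^ e k ∂μ := by
  have := hind.isProbabilityMeasure
  -- Exponent `0` past `n` turns the products over `Fin r` into products over `range n`.
  set e' : ℕ → ℕ := fun k => if k < n then e k else 0
  have restrict : ∀ g : ℕ → ℕ → ℝ, (∀ k, g k 0 = 1) →
      ∏ k ∈ range r, g k (e' k) = ∏ k ∈ range n, g k (e k) := by
    intro g hg
    rw [← prod_range_mul_prod_Ico _ hn,
      prod_eq_one (s := Ico n r) fun k hk => by simp [e', not_lt.2 (mem_Ico.1 hk).1, hg],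
      mul_one]
    exact prod_congr rfl fun k hk => by simp [e', mem_range.1 hk]
  have h := hind.integral_fun_prod_comp (f := fun (k : Fin r) (x : ℝ) => x ^ e' k)
    (fun k => (hV k k.2).aemeasurable) (fun k => (continuous_pow _).aestronglyMeasurable)
  rw [Fin.prod_univ_eq_prod_range (fun k => ∫ ω, V k ω ^ e' k ∂μ),
    restrict (fun k p => ∫ ω, V k ω ^ p ∂μ) fun k => by simp] at h
  rw [← h]
  congr with ω
  rw [Fin.prod_univ_eq_prod_range (fun k => V k ω ^ e' k), restrict (fun k p => V k ω ^ p)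
    fun k => pow_zero _]

/-- The first parameter of the Beta law of the `k`-th factor `V k`. -/
noncomputable def betaShape (α : ℕ → ℝ) (k : ℕ) : ℝ :=
  1 + ∑ l ∈ Icc 1 k, α l

section BetaShape

variable {α : ℕ → ℝ} {r : ℕ}

lemma betaShape_zero (α : ℕ → ℝ) : betaShape α 0 = 1 := by
  simp [betaShape]

lemma betaShape_succ (α : ℕ → ℝ) (k : ℕ) : betaShape α (k + 1) = betaShape α k + α (k + 1) := by
  rw [betaShape, betaShape, sum_Icc_succ_top (by omega), add_assoc]

lemma betaShape_mono (hα : ∀ l, 1 ≤ l → l ≤ r → 0 < α l) {m n : ℕ} (hmn : m ≤ n) (hn : n ≤ r) :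
    betaShape α m ≤ betaShape α n :=
  add_le_add_right (sum_le_sum_of_subset_of_nonneg (Icc_subset_Icc_right hmn)
    fun l hl _ => (hα l (mem_Icc.1 hl).1 ((mem_Icc.1 hl).2.trans hn)).le) 1

lemma one_le_betaShape (hα : ∀ l, 1 ≤ l → l ≤ r → 0 < α l) {n : ℕ} (hn : n ≤ r) :
    1 ≤ betaShape α n :=
  betaShape_zero α ▸ betaShape_mono hα (Nat.zero_le n) hn

lemma betaShape_pos (hα : ∀ l, 1 ≤ l → l ≤ r → 0 < α l) {n : ℕ} (hn : n ≤ r) :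
    0 < betaShape α n :=
  one_pos.trans_le (one_le_betaShape hα hn)

end BetaShape

section StickBreaking

variable {Ω : Type*} [MeasurableSpace Ω] {μ : Measure Ω} {r : ℕ} {α : ℕ → ℝ} {V : ℕ → Ω → ℝ}

lemma integral_eq_betaShape_div (hα : ∀ l, 1 ≤ l → l ≤ r → 0 < α l)
    (hV : ∀ k < r, HasBetaLaw μ (V k) (betaShape α k) (α (k + 1))) {k : ℕ} (hk : k < r) :
    ∫ ω, V k ω ∂μ = betaShape α k / betaShape α (k + 1) := by
  rw [(hV k hk).integral_eq (betaShape_pos hα hk.le) (hα _ (by omega) hk), betaShape_succ]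

lemma integral_sq_eq_betaShape_div (hα : ∀ l, 1 ≤ l → l ≤ r → 0 < α l)
    (hV : ∀ k < r, HasBetaLaw μ (V k) (betaShape α k) (α (k + 1))) {k : ℕ} (hk : k < r) :
    ∫ ω, V k ω ^ 2 ∂μ = betaShape α k * (betaShape α k + 1)
      / (betaShape α (k + 1) * (betaShape α (k + 1) + 1)) := by
  rw [(hV k hk).integral_sq_eq (betaShape_pos hα hk.le) (hα _ (by omega) hk), betaShape_succ]

lemma prod_Ico_integral_eq (hα : ∀ l, 1 ≤ l → l ≤ r → 0 < α l)
    (hV : ∀ k < r, HasBetaLaw μ (V k) (betaShape α k) (α (k + 1))) {m n : ℕ} (hmn : m ≤ n)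
    (hn : n ≤ r) :
    ∏ k ∈ Ico m n, ∫ ω, V k ω ∂μ = betaShape α m / betaShape α n := by
  rw [prod_congr rfl fun k hk => integral_eq_betaShape_div hα hV ((mem_Ico.1 hk).2.trans_le hn)]
  exact prod_Ico_div_succ hmn fun k _ hk => (betaShape_pos hα (hk.trans hn)).ne'

lemma prod_range_integral_sq_eq (hα : ∀ l, 1 ≤ l → l ≤ r → 0 < α l)
    (hV : ∀ k < r, HasBetaLaw μ (V k) (betaShape α k) (α (k + 1))) {n : ℕ} (hn : n ≤ r) :
    ∏ k ∈ range n, ∫ ω, V k ω ^ 2 ∂μ = 2 / (betaShape α n * (betaShape α n + 1)) := by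
  rw [prod_congr rfl fun k hk =>
    integral_sq_eq_betaShape_div hα hV ((mem_range.1 hk).trans_le hn), range_eq_Ico]
  refine (prod_Ico_div_succ (f := fun k => betaShape α k * (betaShape α k + 1)) (Nat.zero_le n)
    fun k _ hk => ?_).trans ?_
  · have := betaShape_pos hα (hk.trans hn)
    positivity
  · norm_num [betaShape_zero]

lemma integral_prod_range (hα : ∀ l, 1 ≤ l → l ≤ r → 0 < α l)
    (hV : ∀ k < r, HasBetaLaw μ (V k) (betaShape α k) (α (k + 1)))
    (hind : iIndepFun (fun k : Fin r => V k) μ) {n : ℕ} (hn : n ≤ r) :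
    ∫ ω, ∏ k ∈ range n, V k ω ∂μ = 1 / betaShape α n := by
  have h := hind.integral_prod_range_pow (fun k hk => (hV k hk).1) hn fun _ => 1
  simp only [pow_one] at h
  rw [h, range_eq_Ico, prod_Ico_integral_eq hα hV (Nat.zero_le n) hn, betaShape_zero]

lemma integral_prod_range_sq (hα : ∀ l, 1 ≤ l → l ≤ r → 0 < α l)
    (hV : ∀ k < r, HasBetaLaw μ (V k) (betaShape α k) (α (k + 1)))
    (hind : iIndepFun (fun k : Fin r => V k) μ) {n : ℕ} (hn : n ≤ r) :
    ∫ ω, (∏ k ∈ range n, V k ω) ^ 2 ∂μ = 2 / (betaShape α n * (betaShape α n + 1)) := by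
  simp_rw [← prod_pow]
  rw [hind.integral_prod_range_pow (fun k hk => (hV k hk).1) hn fun _ => 2,
    prod_range_integral_sq_eq hα hV hn]

lemma integral_prod_range_mul_prod_range (hα : ∀ l, 1 ≤ l → l ≤ r → 0 < α l)
    (hV : ∀ k < r, HasBetaLaw μ (V k) (betaShape α k) (α (k + 1)))
    (hind : iIndepFun (fun k : Fin r => V k) μ) {m n : ℕ} (hmn : m ≤ n) (hn : n ≤ r) :
    ∫ ω, (∏ k ∈ range n, V k ω) * ∏ k ∈ range m, V k ω ∂μ
      = 2 / ((betaShape α m + 1) * betaShape α n) := by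
  -- The factors `V k` with `k < m` occur squared, the others once.
  set p : ℕ → ℕ := fun k => if k < m then 2 else 1
  have split : ∀ g : ℕ → ℕ → ℝ,
      ∏ k ∈ range n, g k (p k) = (∏ k ∈ range m, g k 2) * ∏ k ∈ Ico m n, g k 1 := by
    intro g
    rw [← prod_range_mul_prod_Ico _ hmn]
    congr 1 <;> refine prod_congr rfl fun k hk => ?_
    · simp [p, mem_range.1 hk]
    · simp [p, not_lt.2 (mem_Ico.1 hk).1]
  have hprod : ∀ ω, (∏ k ∈ range n, V k ω) * ∏ k ∈ range m, V k ω
      = ∏ k ∈ range n, V k ω ^ p k := by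
    intro ω
    rw [split (fun k e => V k ω ^ e), ← prod_range_mul_prod_Ico _ hmn]
    simp only [pow_one, prod_pow]
    ring
  simp_rw [hprod]
  rw [hind.integral_prod_range_pow (fun k hk => (hV k hk).1) hn p,
    split (fun k e => ∫ ω, V k ω ^ e ∂μ)]
  simp only [pow_one]
  rw [prod_range_integral_sq_eq hα hV (hmn.trans hn), prod_Ico_integral_eq hα hV hmn hn]
  have := betaShape_pos hα (hmn.trans hn)
  field_simp

end StickBreaking

lemma correlation_ratio_eq {A B : ℝ} (hB : 0 ≤ B) (hBA : B ≤ A) :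
    2 / ((1 + B + 1) * (1 + A)) / (1 / (1 + A) + 1 / (1 + B) - 2 / ((1 + B + 1) * (1 + A))) *
        √((2 * (1 / (1 + A)) / (2 / ((1 + A) * (1 + A + 1))) - 1) *
          (2 * (1 / (1 + B)) / (2 / ((1 + B) * (1 + B + 1))) - 1)) =
      2 * √(1 + A) * (1 + B) ^ ((3 : ℝ) / 2) / (2 * (1 + B) ^ 2 + (2 + B) * (A - B)) := by
  have h1A : 0 < 1 + A := by linarith
  have h1B : 0 < 1 + B := by linarith
  have hsqrtArg : ∀ x : ℝ, 0 < x → 2 * (1 / x) / (2 / (x * (x + 1))) - 1 = x := by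
    intro x hx
    field_simp
    ring
  have hratio :
      2 / ((1 + B + 1) * (1 + A)) / (1 / (1 + A) + 1 / (1 + B) - 2 / ((1 + B + 1) * (1 + A)))
      = 2 * (1 + B) / (2 * (1 + B) ^ 2 + (2 + B) * (A - B)) := by
    have hden : 1 / (1 + A) + 1 / (1 + B) - 2 / ((1 + B + 1) * (1 + A))
        = (2 * (1 + B) ^ 2 + (2 + B) * (A - B)) / ((1 + A) * (1 + B) * (2 + B)) := by
      field_simp
      ring
    rw [hden]
    field_simp
    ring
  rw [hsqrtArg _ h1A, hsqrtArg _ h1B, hratio, Real.sqrt_mul h1A.le,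
    show (3 : ℝ) / 2 = 1 + 1 / 2 by norm_num, Real.rpow_add h1B, Real.rpow_one,
    ← Real.sqrt_eq_rpow]
  ring

theorem H2_multivariate_C_general {Ω : Type*} [MeasurableSpace Ω] (μ : Measure Ω)
    (r : ℕ) (α : ℕ → ℝ)
    (hα : ∀ i, 1 ≤ i → i ≤ r → 0 < α i) (V : ℕ → Ω → ℝ)
    (h0 : HasBetaLaw μ (V 0) 1 (α 1))
    (hk : ∀ k, 1 ≤ k → k ≤ r - 1 →
      HasBetaLaw μ (V k) (1 + ∑ j ∈ Finset.Icc 1 k, α j) (α (k + 1)))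
    (hind : iIndepFun (fun k : Fin r => V k) μ)
    (i j : ℕ) (hi : 1 ≤ i) (hij : i < j) (hj : j ≤ r)
    (Si Sj : Ω → ℝ) (hSi : Si = fun ω => ∏ k ∈ Finset.range (r - i + 1), V k ω)
    (hSj : Sj = fun ω => ∏ k ∈ Finset.range (r - j + 1), V k ω)
    (A B : ℝ) (hA : A = ∑ l ∈ Finset.Icc 1 (r - i + 1), α l)
    (hB : B = ∑ l ∈ Finset.Icc 1 (r - j + 1), α l) :
    (∫ ω, Si ω * Sj ω ∂μ) /
        ((∫ ω, Si ω ∂μ) + (∫ ω, Sj ω ∂μ) - (∫ ω, Si ω * Sj ω ∂μ)) *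
        Real.sqrt ((2 * (∫ ω, Si ω ∂μ) / (∫ ω, Si ω ^ 2 ∂μ) - 1) *
          (2 * (∫ ω, Sj ω ∂μ) / (∫ ω, Sj ω ^ 2 ∂μ) - 1)) =
      2 * Real.sqrt (1 + A) * (1 + B) ^ ((3 : ℝ) / 2) /
        (2 * (1 + B) ^ 2 + (2 + B) * (A - B)) := by
  have hV : ∀ k < r, HasBetaLaw μ (V k) (betaShape α k) (α (k + 1)) := by
    rintro (_ | k) hkr
    · rwa [betaShape_zero]
    · exact hk (k + 1) (by omega) (by omega)
  have hn : r - i + 1 ≤ r := by omega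
  have hmn : r - j + 1 ≤ r - i + 1 := by omega
  have hA' : betaShape α (r - i + 1) = 1 + A := by rw [hA, betaShape]
  have hB' : betaShape α (r - j + 1) = 1 + B := by rw [hB, betaShape]
  subst hSi hSj
  beta_reduce
  rw [integral_prod_range_mul_prod_range hα hV hind hmn hn, integral_prod_range hα hV hind hn,
    integral_prod_range hα hV hind (hmn.trans hn), integral_prod_range_sq hα hV hind hn,
    integral_prod_range_sq hα hV hind (hmn.trans hn), hA', hB']
  refine correlation_ratio_eq ?_ ?_
  · linarith [one_le_betaShape hα (hmn.trans hn)]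
  · linarith [betaShape_mono hα hmn hn]

theorem H2_multivariate_C {Ω : Type*} [MeasurableSpace Ω] (μ : Measure Ω)
    [IsProbabilityMeasure μ] (r : ℕ) (hr : 2 ≤ r) (α : ℕ → ℝ)
    (hα : ∀ i, 1 ≤ i → i ≤ r → 0 < α i) (V : ℕ → Ω → ℝ)
    (h0 : HasBetaLaw μ (V 0) 1 (α 1))
    (hk : ∀ k, 1 ≤ k → k ≤ r - 1 →
      HasBetaLaw μ (V k) (1 + ∑ j ∈ Finset.Icc 1 k, α j) (α (k + 1)))
    (hind : iIndepFun (fun k : Fin r => V k) μ)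
    (i j : ℕ) (hi : 1 ≤ i) (hij : i < j) (hj : j ≤ r)
    (Si Sj : Ω → ℝ) (hSi : Si = fun ω => ∏ k ∈ Finset.range (r - i + 1), V k ω)
    (hSj : Sj = fun ω => ∏ k ∈ Finset.range (r - j + 1), V k ω)
    (A B : ℝ) (hA : A = ∑ l ∈ Finset.Icc 1 (r - i + 1), α l)
    (hB : B = ∑ l ∈ Finset.Icc 1 (r - j + 1), α l) :
    (∫ ω, Si ω * Sj ω ∂μ) /
        ((∫ ω, Si ω ∂μ) + (∫ ω, Sj ω ∂μ) - (∫ ω, Si ω * Sj ω ∂μ)) *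
        Real.sqrt ((2 * (∫ ω, Si ω ∂μ) / (∫ ω, Si ω ^ 2 ∂μ) - 1) *
          (2 * (∫ ω, Sj ω ∂μ) / (∫ ω, Sj ω ^ 2 ∂μ) - 1)) =
      2 * Real.sqrt (1 + A) * (1 + B) ^ ((3 : ℝ) / 2) /
        (2 * (1 + B) ^ 2 + (2 + B) * (A - B)) :=
  H2_multivariate_C_general μ r α hα V h0 hk hind i j hi hij hj Si Sj hSi hSj A B hA hB
end
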